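/- For every positive integer k and n = 2^k − 1, the bordered matrix S^{(k)} := [[1/√2, (−e_1 + e_{n+1})^T], [−e_1 + e_{n+1}, L^{(k)}]] ∈ ℝ^{(n+2)×(n+2)} is positive semidefinite. -/

import Mathlib

noncomputable def rho : ℝ := 1 + Real.sqrt 2

noncomputable def silver (t : ℕ) : ℝ := rho ^ ((padicValNat 2 (t + 1) : ℤ) - 1) + 1

/-- The auxiliary sequence c^{(k)} (zero-based indexing of the 2^k − 1 entries):
c^{(1)} = [2(ρ−1)],
c^{(k+1)} = [π^{(k)}, (1+1/ρ^k)(ρ^{k−1}+1), ρ c^{(k)} − (ρ−1−1/ρ^k) π^{(k)}]. -/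
noncomputable def csil : ℕ → ℕ → ℝ
  | 0, _ => 0
  | 1, _ => 2 * (rho - 1)
  | (k+2), j =>
      let n := 2 ^ (k + 1) - 1
      if j < n then silver j
      else if j = n then (1 + rho ^ (-(k + 1 : ℤ))) * (rho ^ k + 1)
      else rho * csil (k+1) (j - n - 1) - (rho - 1 - rho ^ (-(k + 1 : ℤ))) * silver (j - n - 1)

/-- d^{(k)} := c^{(k)} − π^{(k)} (entrywise, zero-based). -/
noncomputable def dN (k j : ℕ) : ℝ := csil k j - silver j

/-- The matrix L̄^{(k)} ∈ ℝ^{(2^k−1)×(2^k−1)} (zero-based entries), recursively defined: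
L̄^{(1)} = [2(ρ−1)], and L̄^{(k+1)} is the block matrix built from L̄^{(k)} + dd^T (top-left),
ρ²(L̄^{(k)} + dd^T) (bottom-right), a middle row/column [−ρ^k d^T, (ρ^{k−1}+1)(ρ^{k+1}+1),
−ρ(π^{(k)})^T], minus (c^{(k+1)} − π^{(k+1)})(c^{(k+1)} − π^{(k+1)})^T, where d = c^{(k)} − π^{(k)}. -/
noncomputable def LbarN : ℕ → ℕ → ℕ → ℝ
  | 0, _, _ => 0
  | 1, _, _ => 2 * (rho - 1)
  | (k+2), i, j =>
      let n := 2 ^ (k + 1) - 1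
      (if i < n ∧ j < n then LbarN (k+1) i j + dN (k+1) i * dN (k+1) j
       else if i < n ∧ j = n then -(rho ^ (k+1)) * dN (k+1) i
       else if i = n ∧ j < n then -(rho ^ (k+1)) * dN (k+1) j
       else if i = n ∧ j = n then (rho ^ k + 1) * (rho ^ (k + 2) + 1)
       else if i = n then -rho * silver (j - n - 1)
       else if j = n then -rho * silver (i - n - 1)
       else if n < i ∧ n < j then
         rho ^ 2 * (LbarN (k+1) (i - n - 1) (j - n - 1) + dN (k+1) (i - n - 1) * dN (k+1) (j - n - 1))
       else 0)
      - dN (k+2) i * dN (k+2) j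

/-- The Laplacian matrix L^{(k)} ∈ ℝ^{2^k × 2^k}:
L^{(k)} = [[L̄^{(k)}, −(c^{(k)})^T], [−c^{(k)}, 2(ρ^k − 1)]] (zero-based entries). -/
noncomputable def LmatN (k i j : ℕ) : ℝ :=
  let n := 2 ^ k - 1
  if i < n ∧ j < n then LbarN k i j
  else if i < n then -(csil k i)
  else if j < n then -(csil k j)
  else 2 * (rho ^ k - 1)

/-- The vector −e_1 + e_{n+1} ∈ ℝ^{2^k} (zero-based: −1 in entry 0, +1 in entry 2^k − 1). -/
noncomputable def vN (k t : ℕ) : ℝ :=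
  if t = 0 then -1 else if t = 2 ^ k - 1 then 1 else 0

/-- The bordered matrix S^{(k)} = [[1/√2, (−e_1+e_{n+1})^T], [−e_1+e_{n+1}, L^{(k)}]]. -/
noncomputable def SmatN (k i j : ℕ) : ℝ :=
  if i = 0 ∧ j = 0 then 1 / Real.sqrt 2
  else if i = 0 then vN k (j - 1)
  else if j = 0 then vN k (i - 1)
  else LmatN k (i - 1) (j - 1)




lemma sqrt2_sq : Real.sqrt 2 * Real.sqrt 2 = 2 := Real.mul_self_sqrt (by norm_num)
lemma sqrt2_pos : (0:ℝ) < Real.sqrt 2 := Real.sqrt_pos.mpr (by norm_num)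
lemma rho_pos : (0:ℝ) < rho := by have := sqrt2_pos; unfold rho; linarith
lemma rho_ne : rho ≠ 0 := rho_pos.ne'
lemma rho_sq : rho ^ 2 = 2 * rho + 1 := by
  have := sqrt2_sq; unfold rho; ring_nf; nlinarith [sqrt2_sq]
lemma rho_inv : rho⁻¹ = Real.sqrt 2 - 1 := by
  have h : rho * (Real.sqrt 2 - 1) = 1 := by unfold rho; nlinarith [sqrt2_sq]
  exact eq_inv_of_mul_eq_one_right h ▸ (inv_eq_of_mul_eq_one_right h)
lemma rho_gt_one : (1:ℝ) < rho := by have := sqrt2_pos; unfold rho; linarith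

lemma zpow_rho_pos (z : ℤ) : (0:ℝ) < rho ^ z := zpow_pos rho_pos z

lemma silver_pos (t : ℕ) : 0 < silver t := by
  have := zpow_rho_pos ((padicValNat 2 (t + 1) : ℤ) - 1); unfold silver; linarith

lemma padicValNat_two_shift {K m : ℕ} (hm : 0 < m) (hlt : m < 2 ^ K) :
    padicValNat 2 (2 ^ K + m) = padicValNat 2 m := by
  have hm' : m ≠ 0 := hm.ne'
  set v := padicValNat 2 m with hv
  have hvK : v < K := by
    by_contra h
    push_neg at h
    have h2 : (2:ℕ) ^ K ∣ m := dvd_trans (pow_dvd_pow 2 h) pow_padicValNat_dvd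
    have := Nat.le_of_dvd hm h2
    omega
  have hsum : 2 ^ K + m ≠ 0 := by positivity
  apply le_antisymm
  · by_contra h
    push_neg at h
    have h1 : (2:ℕ) ^ (v + 1) ∣ 2 ^ K + m :=
      (padicValNat_dvd_iff_le hsum).mpr (by omega)
    have h2 : (2:ℕ) ^ (v + 1) ∣ 2 ^ K := pow_dvd_pow 2 (by omega)
    have h3 : (2:ℕ) ^ (v + 1) ∣ m := (Nat.dvd_add_right h2).mp h1
    have h4 : v + 1 ≤ v := (padicValNat_dvd_iff_le hm').mp h3
    omega
  · rw [← padicValNat_dvd_iff_le hsum]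
    exact Nat.dvd_add (pow_dvd_pow 2 hvK.le) pow_padicValNat_dvd

lemma silver_zero : silver 0 = Real.sqrt 2 := by
  unfold silver
  norm_num
  rw [rho_inv]
  ring

lemma silver_shift {K s : ℕ} (hs : s < 2 ^ K - 1) : silver (2 ^ K + s) = silver s := by
  unfold silver
  have h2 : (1:ℕ) ≤ 2 ^ K := Nat.one_le_two_pow
  have : 2 ^ K + s + 1 = 2 ^ K + (s + 1) := by ring
  rw [this, padicValNat_two_shift (by omega) (by omega)]

lemma padic_pow (K : ℕ) : padicValNat 2 (2 ^ K) = K := padicValNat.prime_pow K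

lemma silver_pow2 (K : ℕ) (hK : 1 ≤ K) : silver (2 ^ K - 1) = rho ^ (K - 1) + 1 := by
  unfold silver
  have h2 : (1:ℕ) ≤ 2 ^ K := Nat.one_le_two_pow
  have he : 2 ^ K - 1 + 1 = 2 ^ K := by omega
  rw [he, padic_pow]
  congr 1
  have : (K : ℤ) - 1 = ((K - 1 : ℕ) : ℤ) := by omega
  rw [this, zpow_natCast]

open Finset in
lemma sum_silver : ∀ K, 1 ≤ K → ∑ t ∈ range (2 ^ K - 1), silver t = rho ^ K - 1
  | 0, h => absurd h (by omega)
  | 1, _ => by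
      norm_num [silver_zero]
      unfold rho
      ring
  | (K + 2), _ => by
      have IH := sum_silver (K + 1) (by omega)
      have hn : (2:ℕ) ^ (K + 2) - 1 = (2 ^ (K + 1) - 1) + 1 + (2 ^ (K + 1) - 1) := by
        have h1 : (1:ℕ) ≤ 2 ^ (K+1) := Nat.one_le_two_pow
        have h4 : (2:ℕ) ^ (K + 2) = 2 * 2 ^ (K + 1) := by ring
        omega
      rw [hn, Finset.sum_range_add, Finset.sum_range_succ, IH]
      have hshift : ∀ s ∈ range (2 ^ (K+1) - 1),
          silver (2 ^ (K + 1) - 1 + 1 + s) = silver s := by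
        intro s hs
        simp only [mem_range] at hs
        have : (1:ℕ) ≤ 2 ^ (K+1) := Nat.one_le_two_pow
        have he : 2 ^ (K + 1) - 1 + 1 + s = 2 ^ (K+1) + s := by omega
        rw [he, silver_shift hs]
      rw [Finset.sum_congr rfl hshift, IH, silver_pow2 (K+1) (by omega)]
      simp only [Nat.add_sub_cancel]
      linear_combination (-(rho ^ K)) * rho_sq



lemma rho_zpow_neg (k : ℕ) : rho ^ (-(k + 1 : ℤ)) = (rho ^ (k+1))⁻¹ := by
  have h : (-(k + 1 : ℤ)) = -(((k+1 : ℕ)) : ℤ) := by push_cast; ring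
  rw [h, zpow_neg, zpow_natCast]

lemma nge_one (k : ℕ) : (1:ℕ) ≤ 2 ^ (k+1) := Nat.one_le_two_pow

lemma csil_lo {k j : ℕ} (hj : j < 2 ^ (k+1) - 1) : csil (k+2) j = silver j := by
  rw [csil, if_pos hj]

lemma dN_lo {k j : ℕ} (hj : j < 2 ^ (k+1) - 1) : dN (k+2) j = 0 := by
  rw [dN, csil_lo hj, sub_self]

lemma csil_mid (k : ℕ) :
    csil (k+2) (2 ^ (k+1) - 1) = (1 + (rho ^ (k+1))⁻¹) * (rho ^ k + 1) := by
  rw [csil, if_neg (lt_irrefl _), if_pos rfl, rho_zpow_neg]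

lemma dN_mid (k : ℕ) :
    dN (k+2) (2 ^ (k+1) - 1) = (rho ^ (k+1))⁻¹ * (rho ^ k + 1) := by
  rw [dN, csil_mid, silver_pow2 (k+1) (by omega)]
  simp only [Nat.add_sub_cancel]
  ring

lemma csil_hi {k j : ℕ} (hj : j < 2 ^ (k+1) - 1) :
    csil (k+2) (2 ^ (k+1) - 1 + 1 + j)
      = rho * csil (k+1) j - (rho - 1 - (rho ^ (k+1))⁻¹) * silver j := by
  have h1 := nge_one k
  have he : 2 ^ (k+1) - 1 + 1 + j - (2 ^ (k+1) - 1) - 1 = j := by omega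
  rw [csil, if_neg (by omega), if_neg (by omega), rho_zpow_neg, he]

lemma silver_hi {k j : ℕ} (hj : j < 2 ^ (k+1) - 1) :
    silver (2 ^ (k+1) - 1 + 1 + j) = silver j := by
  have h1 := nge_one k
  have he : 2 ^ (k+1) - 1 + 1 + j = 2 ^ (k+1) + j := by omega
  rw [he, silver_shift hj]

lemma dN_hi {k j : ℕ} (hj : j < 2 ^ (k+1) - 1) :
    dN (k+2) (2 ^ (k+1) - 1 + 1 + j)
      = rho * dN (k+1) j + (rho ^ (k+1))⁻¹ * silver j := by
  rw [dN, csil_hi hj, silver_hi hj, dN]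
  ring

lemma dN_nonneg : ∀ k, 1 ≤ k → ∀ j, j < 2 ^ k - 1 → 0 ≤ dN k j
  | 0, h => absurd h (by omega)
  | 1, _ => by
      intro j hj
      interval_cases j
      rw [dN, csil, silver_zero]
      unfold rho
      linarith [sqrt2_pos]
  | (k+2), _ => by
      intro j hj
      have h1 := nge_one k
      have h4 : (2:ℕ) ^ (k + 2) = 2 * 2 ^ (k + 1) := by ring
      rcases lt_trichotomy j (2 ^ (k+1) - 1) with h | h | h
      · rw [dN_lo h]
      · rw [h, dN_mid]
        have := pow_pos rho_pos (k+1)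
        have := pow_pos rho_pos k
        positivity
      · have hj' : j - (2 ^ (k+1) - 1) - 1 < 2 ^ (k+1) - 1 := by omega
        have he : j = 2 ^ (k+1) - 1 + 1 + (j - (2 ^ (k+1) - 1) - 1) := by omega
        rw [he, dN_hi hj']
        have hd := dN_nonneg (k+1) (by omega) _ hj'
        have hs := silver_pos (j - (2 ^ (k+1) - 1) - 1)
        have := pow_pos rho_pos (k+1)
        have := rho_pos
        positivity

open Finset in
lemma sum_csil : ∀ k, 1 ≤ k → ∑ j ∈ range (2 ^ k - 1), csil k j = 2 * (rho ^ k - 1)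
  | 0, h => absurd h (by omega)
  | 1, _ => by simp [csil]
  | (k+2), _ => by
      have IH := sum_csil (k+1) (by omega)
      have hS := sum_silver (k+1) (by omega)
      have h1 := nge_one k
      have h4 : (2:ℕ) ^ (k + 2) = 2 * 2 ^ (k + 1) := by ring
      have hn : (2:ℕ) ^ (k + 2) - 1 = (2 ^ (k + 1) - 1) + 1 + (2 ^ (k + 1) - 1) := by omega
      rw [hn, Finset.sum_range_add, Finset.sum_range_succ]
      rw [Finset.sum_congr rfl (fun j hj => csil_lo (mem_range.mp hj)),
          Finset.sum_congr rfl (fun j hj => csil_hi (mem_range.mp hj))]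
      rw [Finset.sum_sub_distrib, ← Finset.mul_sum, ← Finset.mul_sum, hS, IH, csil_mid]
      have hinv : (rho ^ (k+1))⁻¹ * rho ^ (k+1) = 1 :=
        inv_mul_cancel₀ (pow_ne_zero _ rho_ne)
      have hpow : rho ^ (k+1) ≠ 0 := pow_ne_zero _ rho_ne
      field_simp
      ring_nf
      linear_combination (-(rho ^ (2*k+1)) - rho ^ k) * rho_sq


section regions
variable {k i j : ℕ}

lemma Lbar_tl (hi : i < 2 ^ (k+1) - 1) (hj : j < 2 ^ (k+1) - 1) :
    LbarN (k+2) i j = LbarN (k+1) i j + dN (k+1) i * dN (k+1) j := by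
  rw [LbarN, if_pos ⟨hi, hj⟩, dN_lo hi, dN_lo hj]
  ring

lemma Lbar_tm (hi : i < 2 ^ (k+1) - 1) :
    LbarN (k+2) i (2 ^ (k+1) - 1) = -(rho ^ (k+1)) * dN (k+1) i := by
  rw [LbarN, if_neg (by omega), if_pos ⟨hi, rfl⟩, dN_lo hi]
  ring

lemma Lbar_mt (hj : j < 2 ^ (k+1) - 1) :
    LbarN (k+2) (2 ^ (k+1) - 1) j = -(rho ^ (k+1)) * dN (k+1) j := by
  rw [LbarN, if_neg (by omega), if_neg (by omega), if_pos ⟨rfl, hj⟩, dN_lo hj]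
  ring

lemma Lbar_tr (hi : i < 2 ^ (k+1) - 1) (hj : j < 2 ^ (k+1) - 1) :
    LbarN (k+2) i (2 ^ (k+1) - 1 + 1 + j) = 0 := by
  have h1 := nge_one k
  rw [LbarN, if_neg (by omega), if_neg (by omega), if_neg (by omega), if_neg (by omega),
      if_neg (by omega), if_neg (by omega), if_neg (by omega), dN_lo hi]
  ring

lemma Lbar_rl (hi : i < 2 ^ (k+1) - 1) (hj : j < 2 ^ (k+1) - 1) :
    LbarN (k+2) (2 ^ (k+1) - 1 + 1 + i) j = 0 := by
  have h1 := nge_one k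
  rw [LbarN, if_neg (by omega), if_neg (by omega), if_neg (by omega), if_neg (by omega),
      if_neg (by omega), if_neg (by omega), if_neg (by omega), dN_lo hj]
  ring

lemma Lbar_mm :
    LbarN (k+2) (2 ^ (k+1) - 1) (2 ^ (k+1) - 1)
      = (rho ^ k + 1) * (rho ^ (k + 2) + 1)
        - dN (k+2) (2 ^ (k+1) - 1) * dN (k+2) (2 ^ (k+1) - 1) := by
  rw [LbarN, if_neg (by omega), if_neg (by omega), if_neg (by omega), if_pos ⟨rfl, rfl⟩]

lemma Lbar_mr (hj : j < 2 ^ (k+1) - 1) :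
    LbarN (k+2) (2 ^ (k+1) - 1) (2 ^ (k+1) - 1 + 1 + j)
      = -rho * silver j
        - dN (k+2) (2 ^ (k+1) - 1) * dN (k+2) (2 ^ (k+1) - 1 + 1 + j) := by
  have h1 := nge_one k
  have he : 2 ^ (k+1) - 1 + 1 + j - (2 ^ (k+1) - 1) - 1 = j := by omega
  rw [LbarN, if_neg (by omega), if_neg (by omega), if_neg (by omega), if_neg (by omega),
      if_pos rfl, he]

lemma Lbar_rm (hi : i < 2 ^ (k+1) - 1) :
    LbarN (k+2) (2 ^ (k+1) - 1 + 1 + i) (2 ^ (k+1) - 1)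
      = -rho * silver i
        - dN (k+2) (2 ^ (k+1) - 1 + 1 + i) * dN (k+2) (2 ^ (k+1) - 1) := by
  have h1 := nge_one k
  have he : 2 ^ (k+1) - 1 + 1 + i - (2 ^ (k+1) - 1) - 1 = i := by omega
  rw [LbarN, if_neg (by omega), if_neg (by omega), if_neg (by omega), if_neg (by omega),
      if_neg (by omega), if_pos rfl, he]

lemma Lbar_rr (hi : i < 2 ^ (k+1) - 1) (hj : j < 2 ^ (k+1) - 1) :
    LbarN (k+2) (2 ^ (k+1) - 1 + 1 + i) (2 ^ (k+1) - 1 + 1 + j)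
      = rho ^ 2 * (LbarN (k+1) i j + dN (k+1) i * dN (k+1) j)
        - dN (k+2) (2 ^ (k+1) - 1 + 1 + i) * dN (k+2) (2 ^ (k+1) - 1 + 1 + j) := by
  have h1 := nge_one k
  have hei : 2 ^ (k+1) - 1 + 1 + i - (2 ^ (k+1) - 1) - 1 = i := by omega
  have hej : 2 ^ (k+1) - 1 + 1 + j - (2 ^ (k+1) - 1) - 1 = j := by omega
  rw [LbarN, if_neg (by omega), if_neg (by omega), if_neg (by omega), if_neg (by omega),
      if_neg (by omega), if_neg (by omega), if_pos ⟨by omega, by omega⟩, hei, hej]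

end regions

lemma Lbar_symm : ∀ k, 1 ≤ k → ∀ i j, i < 2 ^ k - 1 → j < 2 ^ k - 1 →
    LbarN k i j = LbarN k j i
  | 0, h => absurd h (by omega)
  | 1, _ => by intro i j hi hj; interval_cases i; interval_cases j; rfl
  | (k+2), _ => by
      intro i j hi hj
      have IH := Lbar_symm (k+1) (by omega)
      have h1 := nge_one k
      have h4 : (2:ℕ) ^ (k + 2) = 2 * 2 ^ (k + 1) := by ring
      set n := 2 ^ (k+1) - 1 with hn
      rcases lt_trichotomy i n with h | h | h <;> rcases lt_trichotomy j n with h' | h' | h'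
      · rw [Lbar_tl h h', Lbar_tl h' h, IH i j h h']; ring
      · subst h'; rw [Lbar_tm h, Lbar_mt h]
      · obtain ⟨j', hj', rfl⟩ : ∃ j', j' < n ∧ j = n + 1 + j' := ⟨j - n - 1, by omega, by omega⟩
        rw [Lbar_tr h hj', Lbar_rl hj' h]
      · subst h; rw [Lbar_mt h', Lbar_tm h']
      · subst h; subst h'; rfl
      · subst h
        obtain ⟨j', hj', rfl⟩ : ∃ j', j' < n ∧ j = n + 1 + j' := ⟨j - n - 1, by omega, by omega⟩
        rw [Lbar_mr hj', Lbar_rm hj']; ring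
      · obtain ⟨i', hi', rfl⟩ : ∃ i', i' < n ∧ i = n + 1 + i' := ⟨i - n - 1, by omega, by omega⟩
        rw [Lbar_rl hi' h', Lbar_tr h' hi']
      · subst h'
        obtain ⟨i', hi', rfl⟩ : ∃ i', i' < n ∧ i = n + 1 + i' := ⟨i - n - 1, by omega, by omega⟩
        rw [Lbar_rm hi', Lbar_mr hi']; ring
      · obtain ⟨i', hi', rfl⟩ : ∃ i', i' < n ∧ i = n + 1 + i' := ⟨i - n - 1, by omega, by omega⟩
        obtain ⟨j', hj', rfl⟩ : ∃ j', j' < n ∧ j = n + 1 + j' := ⟨j - n - 1, by omega, by omega⟩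
        rw [Lbar_rr hi' hj', Lbar_rr hj' hi', IH i' j' hi' hj']
        ring

open Finset in
lemma sum_dN (k : ℕ) (hk : 1 ≤ k) : ∑ j ∈ range (2 ^ k - 1), dN k j = rho ^ k - 1 := by
  unfold dN
  rw [Finset.sum_sub_distrib, sum_csil k hk, sum_silver k hk]
  ring

lemma P1 : ∀ k, 1 ≤ k → ∀ i j, i < 2 ^ k - 1 → j < 2 ^ k - 1 → i ≠ j →
    LbarN k i j + dN k i * dN k j ≤ 0
  | 0, h => absurd h (by omega)
  | 1, _ => by intro i j hi hj hij; omega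
  | (k+2), _ => by
      intro i j hi hj hij
      have IH := P1 (k+1) (by omega)
      have hd := dN_nonneg (k+1) (by omega)
      have h1 := nge_one k
      have h4 : (2:ℕ) ^ (k + 2) = 2 * 2 ^ (k + 1) := by ring
      have hrp : (0:ℝ) < rho ^ (k+1) := pow_pos rho_pos (k+1)
      set n := 2 ^ (k+1) - 1 with hn
      rcases lt_trichotomy i n with h | h | h <;> rcases lt_trichotomy j n with h' | h' | h'
      · rw [Lbar_tl h h', dN_lo h, dN_lo h']
        simpa using IH i j h h' hij
      · subst h'; rw [Lbar_tm h, dN_lo h]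
        have := hd i h
        nlinarith
      · obtain ⟨j', hj', rfl⟩ : ∃ j', j' < n ∧ j = n + 1 + j' := ⟨j - n - 1, by omega, by omega⟩
        rw [Lbar_tr h hj', dN_lo h]
        ring_nf
        rfl
      · subst h; rw [Lbar_mt h', dN_lo h']
        have := hd j h'
        nlinarith
      · omega
      · subst h
        obtain ⟨j', hj', rfl⟩ : ∃ j', j' < n ∧ j = n + 1 + j' := ⟨j - n - 1, by omega, by omega⟩
        rw [Lbar_mr hj']
        have := silver_pos j'
        have := rho_pos
        nlinarith
      · obtain ⟨i', hi', rfl⟩ : ∃ i', i' < n ∧ i = n + 1 + i' := ⟨i - n - 1, by omega, by omega⟩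
        rw [Lbar_rl hi' h', dN_lo h']
        ring_nf
        rfl
      · subst h'
        obtain ⟨i', hi', rfl⟩ : ∃ i', i' < n ∧ i = n + 1 + i' := ⟨i - n - 1, by omega, by omega⟩
        rw [Lbar_rm hi']
        have := silver_pos i'
        have := rho_pos
        nlinarith
      · obtain ⟨i', hi', rfl⟩ : ∃ i', i' < n ∧ i = n + 1 + i' := ⟨i - n - 1, by omega, by omega⟩
        obtain ⟨j', hj', rfl⟩ : ∃ j', j' < n ∧ j = n + 1 + j' := ⟨j - n - 1, by omega, by omega⟩
        rw [Lbar_rr hi' hj']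
        have hij' : i' ≠ j' := by omega
        have := IH i' j' hi' hj' hij'
        nlinarith [sq_nonneg rho]

open Finset in
lemma rowsum : ∀ k, 1 ≤ k → ∀ i, i < 2 ^ k - 1 →
    ∑ j ∈ range (2 ^ k - 1), LbarN k i j = csil k i
  | 0, h => absurd h (by omega)
  | 1, _ => by intro i hi; interval_cases i; simp [LbarN, csil]
  | (k+2), _ => by
      intro i hi
      have IH := rowsum (k+1) (by omega)
      have hsd := sum_dN (k+1) (by omega)
      have hss := sum_silver (k+1) (by omega)
      have h1 := nge_one k
      have h4 : (2:ℕ) ^ (k + 2) = 2 * 2 ^ (k + 1) := by ring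
      have hrne : (rho:ℝ) ^ (k+1) ≠ 0 := pow_ne_zero _ rho_ne
      have hN : 2 ^ (k+2) - 1 = (2 ^ (k+1) - 1) + 1 + (2 ^ (k+1) - 1) := by omega
      have hsumDhi : ∑ j ∈ range (2 ^ (k+1) - 1), dN (k+2) (2 ^ (k+1) - 1 + 1 + j)
          = rho * (rho ^ (k+1) - 1) + (rho ^ (k+1))⁻¹ * (rho ^ (k+1) - 1) := by
        rw [Finset.sum_congr rfl (fun j hj => dN_hi (mem_range.mp hj)),
            Finset.sum_add_distrib, ← Finset.mul_sum, ← Finset.mul_sum, hsd, hss]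
      rw [hN, Finset.sum_range_add, Finset.sum_range_succ]
      rcases lt_trichotomy i (2 ^ (k+1) - 1) with h | h | h
      · rw [Finset.sum_congr rfl (fun j hj => Lbar_tl h (mem_range.mp hj)),
            Finset.sum_congr rfl (fun j hj => Lbar_tr h (mem_range.mp hj)),
            Lbar_tm h, Finset.sum_add_distrib, ← Finset.mul_sum, hsd, IH i h,
            Finset.sum_const_zero, csil_lo h]
        have hdd : dN (k+1) i = csil (k+1) i - silver i := rfl
        rw [hdd]
        ring
      · subst h
        rw [Finset.sum_congr rfl (fun j hj => Lbar_mt (mem_range.mp hj)),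
            Finset.sum_congr rfl (fun j hj => Lbar_mr (mem_range.mp hj)),
            Lbar_mm, Finset.sum_sub_distrib, ← Finset.mul_sum, ← Finset.mul_sum,
            ← Finset.mul_sum, hsd, hss, hsumDhi, dN_mid, csil_mid]
        field_simp
        linear_combination (rho ^ k + rho ^ (2*k)) * rho_sq
      · obtain ⟨i', hi', rfl⟩ : ∃ i', i' < 2 ^ (k+1) - 1 ∧ i = 2 ^ (k+1) - 1 + 1 + i' :=
          ⟨i - (2 ^ (k+1) - 1) - 1, by omega, by omega⟩
        rw [Finset.sum_congr rfl (fun j hj => Lbar_rl hi' (mem_range.mp hj)),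
            Finset.sum_congr rfl (fun j hj => Lbar_rr hi' (mem_range.mp hj)),
            Lbar_rm hi', Finset.sum_sub_distrib, Finset.sum_const_zero, dN_hi hi',
            dN_mid, csil_hi hi']
        rw [show (fun j => rho ^ 2 * (LbarN (k+1) i' j + dN (k+1) i' * dN (k+1) j)) = fun j => rho ^ 2 * LbarN (k+1) i' j + (rho ^ 2 * dN (k+1) i') * dN (k+1) j from funext fun j => by ring]
        rw [Finset.sum_add_distrib, ← Finset.mul_sum, ← Finset.mul_sum, IH i' hi', hsd,
            ← Finset.mul_sum, hsumDhi]
        have hdd : dN (k+1) i' = csil (k+1) i' - silver i' := rfl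
        rw [hdd]
        field_simp
        linear_combination (rho ^ k * silver i' + rho ^ 2 * rho ^ (2*k) * csil (k+1) i') * rho_sq

lemma csil_nonneg (k : ℕ) (hk : 1 ≤ k) {j : ℕ} (hj : j < 2 ^ k - 1) : 0 ≤ csil k j := by
  have hd := dN_nonneg k hk j hj
  have hs := silver_pos j
  rw [dN] at hd
  linarith

lemma csil_zero_ge (k : ℕ) (hk : 1 ≤ k) : Real.sqrt 2 ≤ csil k 0 := by
  match k, hk with
  | 1, _ =>
    rw [csil]
    unfold rho
    nlinarith [sqrt2_pos]
  | (k+2), _ =>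
    have h1 := nge_one k
    have h4 : (2:ℕ) ^ (k + 1) = 2 * 2 ^ k := by ring
    have h5 := Nat.one_le_two_pow (n := k)
    rw [csil_lo (by omega), silver_zero]

lemma Lbar_offdiag (k : ℕ) (hk : 1 ≤ k) {i j : ℕ} (hi : i < 2 ^ k - 1)
    (hj : j < 2 ^ k - 1) (hij : i ≠ j) : LbarN k i j ≤ 0 := by
  have h := P1 k hk i j hi hj hij
  have h1 := dN_nonneg k hk i hi
  have h2 := dN_nonneg k hk j hj
  nlinarith

open Finset in
lemma lap_quad_nonneg {m : ℕ} (M : ℕ → ℕ → ℝ)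
    (hsym : ∀ i j, i < m → j < m → M i j = M j i)
    (hoff : ∀ i j, i < m → j < m → i ≠ j → M i j ≤ 0)
    (hrow : ∀ i, i < m → ∑ j ∈ range m, M i j = 0)
    (x : ℕ → ℝ) :
    0 ≤ ∑ i ∈ range m, ∑ j ∈ range m, M i j * x i * x j := by
  have hcol : ∀ j, j < m → ∑ i ∈ range m, M i j = 0 := by
    intro j hj
    rw [Finset.sum_congr rfl (fun i hi => hsym i j (mem_range.mp hi) hj)]
    exact hrow j hj
  have h1 : ∑ i ∈ range m, ∑ j ∈ range m, M i j * x i ^ 2 = 0 := by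
    apply Finset.sum_eq_zero
    intro i hi
    rw [← Finset.sum_mul, hrow i (mem_range.mp hi), zero_mul]
  have h3 : ∑ i ∈ range m, ∑ j ∈ range m, M i j * x j ^ 2 = 0 := by
    rw [Finset.sum_comm]
    apply Finset.sum_eq_zero
    intro j hj
    rw [← Finset.sum_mul, hcol j (mem_range.mp hj), zero_mul]
  have key : ∑ i ∈ range m, ∑ j ∈ range m, M i j * (x i - x j) ^ 2
      = -2 * ∑ i ∈ range m, ∑ j ∈ range m, M i j * x i * x j := by
    have e : ∀ i j : ℕ, M i j * (x i - x j) ^ 2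
        = M i j * x i ^ 2 + M i j * x j ^ 2 - 2 * (M i j * x i * x j) := by intros; ring
    simp_rw [e, Finset.sum_sub_distrib, Finset.sum_add_distrib, ← Finset.mul_sum]
    rw [h1, h3]
    ring
  have hle : ∑ i ∈ range m, ∑ j ∈ range m, M i j * (x i - x j) ^ 2 ≤ 0 := by
    apply Finset.sum_nonpos
    intro i hi
    apply Finset.sum_nonpos
    intro j hj
    rcases eq_or_ne i j with rfl | hij
    · simp
    · exact mul_nonpos_of_nonpos_of_nonneg
        (hoff i j (mem_range.mp hi) (mem_range.mp hj) hij) (sq_nonneg _)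
  rw [key] at hle
  linarith




noncomputable def Mlap (k i j : ℕ) : ℝ := LmatN k i j - Real.sqrt 2 * vN k i * vN k j

lemma vN_lo {k t : ℕ} (h : t < 2 ^ k - 1) : vN k t = if t = 0 then -1 else 0 := by
  unfold vN
  rcases eq_or_ne t 0 with rfl | ht
  · simp
  · rw [if_neg ht, if_neg (by omega), if_neg ht]

lemma vN_last {k : ℕ} (hk : 1 ≤ k) : vN k (2 ^ k - 1) = 1 := by
  have h2 : (2:ℕ) ≤ 2 ^ k := by
    calc (2:ℕ) = 2 ^ 1 := by norm_num
    _ ≤ 2 ^ k := Nat.pow_le_pow_right (by norm_num) hk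
  unfold vN
  rw [if_neg (by omega), if_pos rfl]

open Finset in
lemma sum_vN (k : ℕ) (hk : 1 ≤ k) : ∑ t ∈ range (2 ^ k), vN k t = 0 := by
  have h2 : (2:ℕ) ≤ 2 ^ k := by
    calc (2:ℕ) = 2 ^ 1 := by norm_num
    _ ≤ 2 ^ k := Nat.pow_le_pow_right (by norm_num) hk
  have hsplit : (2:ℕ) ^ k = (2 ^ k - 1) + 1 := by omega
  rw [hsplit, Finset.sum_range_succ,
      Finset.sum_congr rfl (fun t ht => vN_lo (mem_range.mp ht)), vN_last hk]
  rw [Finset.sum_ite_eq' (range (2 ^ k - 1)) 0 (fun _ => (-1:ℝ))]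
  rw [if_pos (mem_range.mpr (by omega))]
  ring

lemma Lmat_symm (k : ℕ) (hk : 1 ≤ k) {i j : ℕ} (hi : i < 2 ^ k) (hj : j < 2 ^ k) :
    LmatN k i j = LmatN k j i := by
  unfold LmatN
  rcases lt_or_ge i (2 ^ k - 1) with h | h <;> rcases lt_or_ge j (2 ^ k - 1) with h' | h'
  · rw [if_pos ⟨h, h'⟩, if_pos ⟨h', h⟩, Lbar_symm k hk i j h h']
  · rw [if_neg (by omega), if_pos h, if_neg (by omega), if_neg (by omega), if_pos h]
  · rw [if_neg (by omega), if_neg (by omega), if_pos h', if_neg (by omega), if_pos h']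
  · rw [if_neg (by omega), if_neg (by omega), if_neg (by omega),
        if_neg (by omega), if_neg (by omega), if_neg (by omega)]

lemma Mlap_symm (k : ℕ) (hk : 1 ≤ k) {i j : ℕ} (hi : i < 2 ^ k) (hj : j < 2 ^ k) :
    Mlap k i j = Mlap k j i := by
  unfold Mlap
  rw [Lmat_symm k hk hi hj]
  ring

lemma Mlap_off (k : ℕ) (hk : 1 ≤ k) {i j : ℕ} (hi : i < 2 ^ k) (hj : j < 2 ^ k)
    (hij : i ≠ j) : Mlap k i j ≤ 0 := by
  have hs2 := sqrt2_pos
  unfold Mlap LmatN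
  rcases lt_or_ge i (2 ^ k - 1) with h | h <;> rcases lt_or_ge j (2 ^ k - 1) with h' | h'
  · rw [if_pos ⟨h, h'⟩, vN_lo h, vN_lo h']
    have hL := Lbar_offdiag k hk h h' hij
    rcases eq_or_ne i 0 with rfl | hi0
    · rw [if_pos rfl, if_neg (by omega)]
      linarith
    · rw [if_neg hi0]
      linarith
  · have hj' : j = 2 ^ k - 1 := by omega
    subst hj'
    rw [if_neg (by omega), if_pos h, vN_lo h, vN_last hk]
    rcases eq_or_ne i 0 with rfl | hi0
    · rw [if_pos rfl]
      have := csil_zero_ge k hk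
      linarith
    · rw [if_neg hi0]
      have := csil_nonneg k hk h
      linarith
  · have hi' : i = 2 ^ k - 1 := by omega
    subst hi'
    rw [if_neg (by omega), if_neg (by omega), if_pos h', vN_lo h', vN_last hk]
    rcases eq_or_ne j 0 with rfl | hj0
    · rw [if_pos rfl]
      have := csil_zero_ge k hk
      linarith
    · rw [if_neg hj0]
      have := csil_nonneg k hk h'
      linarith
  · omega

lemma Lmat_tl {k i j : ℕ} (h : i < 2 ^ k - 1) (h' : j < 2 ^ k - 1) :
    LmatN k i j = LbarN k i j := by
  simp only [LmatN]; rw [if_pos ⟨h, h'⟩]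

lemma Lmat_tm {k i j : ℕ} (h : i < 2 ^ k - 1) (h' : ¬ j < 2 ^ k - 1) :
    LmatN k i j = -(csil k i) := by
  simp only [LmatN]; rw [if_neg (fun hc => h' hc.2), if_pos h]

lemma Lmat_mt {k i j : ℕ} (h : ¬ i < 2 ^ k - 1) (h' : j < 2 ^ k - 1) :
    LmatN k i j = -(csil k j) := by
  simp only [LmatN]; rw [if_neg (fun hc => h hc.1), if_neg h, if_pos h']

lemma Lmat_mm {k i j : ℕ} (h : ¬ i < 2 ^ k - 1) (h' : ¬ j < 2 ^ k - 1) :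
    LmatN k i j = 2 * (rho ^ k - 1) := by
  simp only [LmatN]; rw [if_neg (fun hc => h hc.1), if_neg h, if_neg h']

open Finset in
lemma Mlap_row (k : ℕ) (hk : 1 ≤ k) {i : ℕ} (hi : i < 2 ^ k) :
    ∑ j ∈ range (2 ^ k), Mlap k i j = 0 := by
  unfold Mlap
  rw [Finset.sum_sub_distrib]
  have hv : ∑ j ∈ range (2 ^ k), Real.sqrt 2 * vN k i * vN k j
      = Real.sqrt 2 * vN k i * ∑ j ∈ range (2 ^ k), vN k j := by
    rw [Finset.mul_sum]
  rw [hv, sum_vN k hk, mul_zero]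
  have hsplit : (2:ℕ) ^ k = (2 ^ k - 1) + 1 := by
    have := Nat.one_le_two_pow (n := k)
    omega
  rw [hsplit, Finset.sum_range_succ]
  rcases lt_or_ge i (2 ^ k - 1) with h | h
  · rw [Finset.sum_congr rfl (fun j hj => Lmat_tl h (mem_range.mp hj)),
        Lmat_tm h (by omega), rowsum k hk i h]
    ring
  · rw [Finset.sum_congr rfl (fun j hj => Lmat_mt (by omega) (mem_range.mp hj)),
        Lmat_mm (by omega) (by omega)]
    rw [Finset.sum_neg_distrib, sum_csil k hk]
    ring

lemma Smat_00 (k : ℕ) : SmatN k 0 0 = 1 / Real.sqrt 2 := by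
  unfold SmatN; rw [if_pos ⟨rfl, rfl⟩]

lemma Smat_0r (k j : ℕ) : SmatN k 0 (j + 1) = vN k j := by
  unfold SmatN
  rw [if_neg (fun h => Nat.succ_ne_zero j h.2), if_pos rfl]
  norm_num

lemma Smat_r0 (k i : ℕ) : SmatN k (i + 1) 0 = vN k i := by
  unfold SmatN
  rw [if_neg (fun h => Nat.succ_ne_zero i h.1), if_neg (Nat.succ_ne_zero i), if_pos rfl]
  norm_num

lemma Smat_rr (k i j : ℕ) : SmatN k (i + 1) (j + 1) = LmatN k i j := by
  unfold SmatN
  rw [if_neg (fun h => Nat.succ_ne_zero i h.1), if_neg (Nat.succ_ne_zero i),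
      if_neg (Nat.succ_ne_zero j)]
  norm_num

lemma Smat_symm (k : ℕ) (hk : 1 ≤ k) (i j : ℕ) : SmatN k i j = SmatN k j i := by
  match i, j with
  | 0, 0 => rfl
  | 0, (j+1) => rw [Smat_0r, Smat_r0]
  | (i+1), 0 => rw [Smat_0r, Smat_r0]
  | (i+1), (j+1) =>
    rw [Smat_rr, Smat_rr]
    unfold LmatN
    rcases lt_or_ge i (2 ^ k - 1) with h | h <;> rcases lt_or_ge j (2 ^ k - 1) with h' | h'
    · rw [if_pos ⟨h, h'⟩, if_pos ⟨h', h⟩, Lbar_symm k hk i j h h']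
    · rw [if_neg (by omega), if_pos h, if_neg (by omega), if_neg (by omega), if_pos h]
    · rw [if_neg (by omega), if_neg (by omega), if_pos h', if_neg (by omega), if_pos h']
    · rw [if_neg (by omega), if_neg (by omega), if_neg (by omega),
          if_neg (by omega), if_neg (by omega), if_neg (by omega)]

open Matrix Finset in
theorem Smat_posSemidef' (k : ℕ) (hk : 1 ≤ k) :
    (Matrix.of fun i j : Fin (2 ^ k + 1) => SmatN k i j).PosSemidef := by
  have h2 : (1:ℕ) ≤ 2 ^ k := Nat.one_le_two_pow
  rw [Matrix.posSemidef_iff_dotProduct_mulVec]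
  constructor
  · ext i j
    simp only [Matrix.conjTranspose_apply, Matrix.of_apply, star_trivial]
    exact Smat_symm k hk j i
  · intro x
    rw [star_trivial]
    set y : ℕ → ℝ := fun t => if h : t < 2 ^ k + 1 then x ⟨t, h⟩ else 0 with hy
    have hyx : ∀ i : Fin (2 ^ k + 1), x i = y i.val := fun i => by
      rw [hy]; simp only [i.isLt, dif_pos]
    have hQ : x ⬝ᵥ ((Matrix.of fun i j : Fin (2 ^ k + 1) => SmatN k i j) *ᵥ x)
        = ∑ i ∈ range (2 ^ k + 1), ∑ j ∈ range (2 ^ k + 1), SmatN k i j * y i * y j := by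
      rw [← Fin.sum_univ_eq_sum_range
        (fun i => ∑ j ∈ range (2 ^ k + 1), SmatN k i j * y i * y j) (2 ^ k + 1)]
      rw [dotProduct]
      apply Finset.sum_congr rfl
      intro i _
      rw [← Fin.sum_univ_eq_sum_range (fun j => SmatN k i.val j * y i.val * y j) (2 ^ k + 1)]
      simp only [Matrix.mulVec, dotProduct, Matrix.of_apply]
      rw [Finset.mul_sum]
      apply Finset.sum_congr rfl
      intro j _
      rw [hyx i, hyx j]
      ring
    rw [hQ]
    set z : ℕ → ℝ := fun t => y (t + 1) with hz
    set a : ℝ := ∑ t ∈ range (2 ^ k), vN k t * z t with ha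
    set b : ℕ → ℝ := fun t => vN k t * z t with hb
    have hbz : ∀ t, vN k t * z t = b t := fun t => rfl
    have hsplit : ∑ i ∈ range (2 ^ k + 1), ∑ j ∈ range (2 ^ k + 1), SmatN k i j * y i * y j
        = (∑ i ∈ range (2 ^ k), ∑ j ∈ range (2 ^ k), Mlap k i j * z i * z j)
          + Real.sqrt 2 * a * a + y 0 * a + y 0 * a + (1 / Real.sqrt 2) * (y 0 * y 0) := by
      rw [Finset.sum_range_succ']
      have hinner : ∀ i : ℕ, ∑ j ∈ range (2 ^ k + 1), SmatN k (i + 1) j * y (i + 1) * y j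
          = (∑ j ∈ range (2 ^ k), (Mlap k i j * z i * z j + (Real.sqrt 2 * b i) * b j))
            + b i * y 0 := by
        intro i
        rw [Finset.sum_range_succ', Smat_r0]
        congr 1
        · apply Finset.sum_congr rfl
          intro j _
          rw [Smat_rr]
          have hL : LmatN k i j = Mlap k i j + Real.sqrt 2 * vN k i * vN k j := by
            unfold Mlap; ring
          rw [hL, hb]
          show (Mlap k i j + Real.sqrt 2 * vN k i * vN k j) * y (i+1) * y (j+1)
              = Mlap k i j * z i * z j + Real.sqrt 2 * (vN k i * z i) * (vN k j * z j)
          rw [hz]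
          ring
      rw [Finset.sum_congr rfl (fun i _ => hinner i)]
      have hfirst : ∑ j ∈ range (2 ^ k + 1), SmatN k 0 j * y 0 * y j
          = y 0 * a + (1 / Real.sqrt 2) * (y 0 * y 0) := by
        rw [Finset.sum_range_succ', Smat_00, ha]
        rw [Finset.mul_sum]
        congr 1
        · apply Finset.sum_congr rfl
          intro j _
          rw [Smat_0r]
          show vN k j * y 0 * y (j + 1) = y 0 * (vN k j * z j)
          rw [hz]
          ring
        · ring
      have hrow2 : ∀ i : ℕ, ∑ j ∈ range (2 ^ k), (Mlap k i j * z i * z j + Real.sqrt 2 * b i * b j)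
            + b i * y 0
          = (∑ j ∈ range (2 ^ k), Mlap k i j * z i * z j) + ((Real.sqrt 2 * a) * b i + b i * y 0) := by
        intro i
        rw [Finset.sum_add_distrib]
        have : ∑ j ∈ range (2 ^ k), Real.sqrt 2 * b i * b j = (Real.sqrt 2 * a) * b i := by
          rw [← Finset.mul_sum, ← ha]
          ring
        rw [this]
        ring
      rw [Finset.sum_congr rfl (fun i _ => hrow2 i), hfirst, Finset.sum_add_distrib,
          Finset.sum_add_distrib, ← Finset.mul_sum, ← Finset.sum_mul, ← ha]
      ring
    rw [hsplit]
    have hQM : 0 ≤ ∑ i ∈ range (2 ^ k), ∑ j ∈ range (2 ^ k), Mlap k i j * z i * z j := by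
      apply lap_quad_nonneg
      · exact fun i j hi hj => Mlap_symm k hk hi hj
      · exact fun i j hi hj hij => Mlap_off k hk hi hj hij
      · exact fun i hi => Mlap_row k hk hi
    have hs2 := sqrt2_pos
    have hsq := sqrt2_sq
    have hnn : 0 ≤ Real.sqrt 2 * a * a + y 0 * a + y 0 * a + (1 / Real.sqrt 2) * (y 0 * y 0) := by
      have h1 : Real.sqrt 2 * (Real.sqrt 2 * a * a + y 0 * a + y 0 * a
            + (1 / Real.sqrt 2) * (y 0 * y 0))
          = Real.sqrt 2 * Real.sqrt 2 * (a * a) + 2 * Real.sqrt 2 * (y 0 * a) + y 0 * y 0 := by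
        field_simp
        ring
      have h2 : Real.sqrt 2 * Real.sqrt 2 * (a * a) + 2 * Real.sqrt 2 * (y 0 * a) + y 0 * y 0
          = (y 0 + Real.sqrt 2 * a) ^ 2 := by
        ring
      nlinarith [sq_nonneg (y 0 + Real.sqrt 2 * a), h1, h2, hs2]
    linarith

/-- for every positive integer k and n = 2^k − 1, the bordered matrix
S^{(k)} = [[1/√2, (−e_1+e_{n+1})^T], [−e_1+e_{n+1}, L^{(k)}]] ∈ ℝ^{(n+2)×(n+2)}
is positive semidefinite. -/
theorem Smat_posSemidef (k : ℕ) (hk : 1 ≤ k) :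
    (Matrix.of fun i j : Fin (2 ^ k + 1) => SmatN k i j).PosSemidef :=
  Smat_posSemidef' k hk
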